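/- arXiv:1103.5137 — 3 statements merged into one kernel-verified Lean document; each statement's English description precedes it below -/
import Mathlib

section
/- Let S denote the unilateral shift on ℓ²(ℕ), defined by S(a₀, a₁, a₂, …) = (0, a₀, a₁, …). The operator S ⊕ S*, acting on ℓ²(ℕ) ⊕ ℓ²(ℕ) by (x, y) ↦ (Sx, S*y), is complex symmetric. -/
open Filter ContinuousLinearMap

noncomputable section

/-- A conjugation on a complex Hilbert space `H` is a conjugate-linear, isometric
involution `C : H → H`. -/
def IsConjugation {H : Type*} [NormedAddCommGroup H] [InnerProductSpace ℂ H]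
    (C : H → H) : Prop :=
  (∀ x y : H, C (x + y) = C x + C y) ∧
  (∀ (a : ℂ) (x : H), C (a • x) = (starRingEnd ℂ) a • C x) ∧
  (∀ x : H, ‖C x‖ = ‖x‖) ∧
  (∀ x : H, C (C x) = x)

/-- A bounded operator `T` on a complex Hilbert space is complex symmetric if there is a
conjugation `C` with `T = C T* C`. -/
def IsComplexSymmetric {H : Type*} [NormedAddCommGroup H] [InnerProductSpace ℂ H]
    [CompleteSpace H] (T : H →L[ℂ] H) : Prop :=
  ∃ C : H → H, IsConjugation C ∧
    ∀ x : H, T x = C (ContinuousLinearMap.adjoint T (C x))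

/-- `ℓ²(ℕ)` over `ℂ`. -/
abbrev ellTwo : Type := lp (fun _ : ℕ => ℂ) 2

/-- `S` is the unilateral shift on `ℓ²(ℕ)`: `S (a₀, a₁, a₂, …) = (0, a₀, a₁, …)`. -/
def IsUnilateralShift (S : ellTwo →L[ℂ] ellTwo) : Prop :=
  ∀ a : ellTwo, S a 0 = 0 ∧ ∀ n : ℕ, S a (n + 1) = a n

/-!
Coordinatewise complex conjugation `J` on `ℓ²(ℕ)` commutes with the shift `S`, and since `J`
is antiunitary it then also commutes with `S*`. On `ℓ²(ℕ) ⊕ ℓ²(ℕ)` the map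
`C (x, y) = (J y, J x)` is a conjugation, and as `(S ⊕ S*)* = S* ⊕ S`,
`C (S ⊕ S*)* C (x, y) = (J S J x, J S* J y) = (S x, S* y)`.
-/

open Complex WithLp
open scoped InnerProductSpace

namespace IsConjugation

variable {H : Type*} [NormedAddCommGroup H] [InnerProductSpace ℂ H] {J : H → H}

lemma map_neg (hJ : IsConjugation J) (x : H) : J (-x) = -J x := by
  simpa using hJ.2.1 (-1) x

lemma map_sub (hJ : IsConjugation J) (x y : H) : J (x - y) = J x - J y := by
  rw [sub_eq_add_neg, hJ.1, hJ.map_neg, ← sub_eq_add_neg]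

lemma map_I_smul (hJ : IsConjugation J) (x : H) : J (I • x) = -(I • J x) := by
  rw [hJ.2.1, conj_I, neg_smul]

lemma inner_map_map (hJ : IsConjugation J) (x y : H) : ⟪J x, J y⟫_ℂ = ⟪y, x⟫_ℂ := by
  rw [← inner_conj_symm y x]
  refine RCLike.ext ?_ ?_
  · rw [RCLike.conj_re, re_inner_eq_norm_add_mul_self_sub_norm_sub_mul_self_div_four (𝕜 := ℂ),
      re_inner_eq_norm_add_mul_self_sub_norm_sub_mul_self_div_four (𝕜 := ℂ), ← hJ.1,
      ← hJ.map_sub, hJ.2.2.1, hJ.2.2.1]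
  · have h₁ : J x - I • J y = J (x + I • y) := by rw [hJ.1, hJ.map_I_smul, sub_eq_add_neg]
    have h₂ : J x + I • J y = J (x - I • y) := by
      rw [hJ.map_sub, hJ.map_I_smul, sub_neg_eq_add]
    rw [RCLike.conj_im,
      im_inner_eq_norm_sub_i_smul_mul_self_sub_norm_add_i_smul_mul_self_div_four (𝕜 := ℂ),
      im_inner_eq_norm_sub_i_smul_mul_self_sub_norm_add_i_smul_mul_self_div_four (𝕜 := ℂ)]
    simp only [RCLike.I_to_complex, h₁, h₂, hJ.2.2.1]
    ring

lemma map_adjoint_apply [CompleteSpace H] (hJ : IsConjugation J) {A : H →L[ℂ] H}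
    (hA : ∀ x, J (A x) = A (J x)) (x : H) : J (adjoint A x) = adjoint A (J x) := by
  refine ext_inner_left ℂ fun v => ?_
  rw [adjoint_inner_right, ← hJ.2.2.2 v, hJ.inner_map_map, ← hA, hJ.inner_map_map,
    adjoint_inner_left]

end IsConjugation

section DirectSum

variable {E F : Type*} [NormedAddCommGroup E] [InnerProductSpace ℂ E] [CompleteSpace E]
  [NormedAddCommGroup F] [InnerProductSpace ℂ F] [CompleteSpace F]

lemma adjoint_apply_of_apply_eq_toLp {A : E →L[ℂ] E} {B : F →L[ℂ] F}
    {T : WithLp 2 (E × F) →L[ℂ] WithLp 2 (E × F)}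
    (hT : ∀ x, T x = toLp 2 (A x.ofLp.1, B x.ofLp.2)) (y : WithLp 2 (E × F)) :
    adjoint T y = toLp 2 (adjoint A y.ofLp.1, adjoint B y.ofLp.2) := by
  refine ext_inner_left ℂ fun v => ?_
  rw [adjoint_inner_right, hT, prod_inner_apply, prod_inner_apply, adjoint_inner_right,
    adjoint_inner_right]

end DirectSum

section Swap

def conjSwap {H : Type*} (J : H → H) (x : WithLp 2 (H × H)) : WithLp 2 (H × H) :=
  toLp 2 (J x.ofLp.2, J x.ofLp.1)

variable {H : Type*} [NormedAddCommGroup H] [InnerProductSpace ℂ H] {J : H → H}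

lemma IsConjugation.conjSwap (hJ : IsConjugation J) : IsConjugation (conjSwap J) :=
  ⟨fun x y => congrArg (toLp 2) (Prod.ext (hJ.1 _ _) (hJ.1 _ _)),
    fun a x => congrArg (toLp 2) (Prod.ext (hJ.2.1 _ _) (hJ.2.1 _ _)),
    fun x => by
      simp only [_root_.conjSwap, prod_norm_eq_of_L2, toLp_fst, toLp_snd, ofLp_fst, ofLp_snd,
        hJ.2.2.1, add_comm],
    fun x => congrArg (toLp 2) (Prod.ext (hJ.2.2.2 _) (hJ.2.2.2 _))⟩

theorem isComplexSymmetric_of_commute_conjugation [CompleteSpace H] (hJ : IsConjugation J)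
    {A : H →L[ℂ] H} (hA : ∀ x, J (A x) = A (J x))
    {T : WithLp 2 (H × H) →L[ℂ] WithLp 2 (H × H)}
    (hT : ∀ x, T x = toLp 2 (A x.ofLp.1, adjoint A x.ofLp.2)) : IsComplexSymmetric T := by
  refine ⟨conjSwap J, hJ.conjSwap, fun x => ?_⟩
  rw [hT, conjSwap, adjoint_apply_of_apply_eq_toLp hT, adjoint_adjoint, conjSwap]
  simp only [← hA, ← hJ.map_adjoint_apply hA, hJ.2.2.2]

end Swap

lemma lp.isConjugation_star {ι : Type*} : IsConjugation (star : lp (fun _ : ι => ℂ) 2 → _) :=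
  ⟨star_add, fun a x => by rw [star_smul, Complex.star_def], norm_star, star_star⟩

lemma IsUnilateralShift.star_apply {S : ellTwo →L[ℂ] ellTwo} (hS : IsUnilateralShift S)
    (x : ellTwo) : star (S x) = S (star x) := by
  ext (_ | n)
  · simp [lp.star_apply, (hS x).1, (hS (star x)).1]
  · simp [lp.star_apply, (hS x).2 n, (hS (star x)).2 n]

/-- If `S` is the unilateral shift on `ℓ²(ℕ)`, then `S ⊕ S*`, acting on
`ℓ²(ℕ) ⊕ ℓ²(ℕ)` by `(x, y) ↦ (S x, S* y)`, is complex symmetric. -/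
theorem isComplexSymmetric_shift_dirsum_adjoint
    (S : ellTwo →L[ℂ] ellTwo) (hS : IsUnilateralShift S)
    (T : WithLp 2 (ellTwo × ellTwo) →L[ℂ] WithLp 2 (ellTwo × ellTwo))
    (hT : ∀ x : WithLp 2 (ellTwo × ellTwo),
      (T x).ofLp.1 = S x.ofLp.1 ∧ (T x).ofLp.2 = ContinuousLinearMap.adjoint S x.ofLp.2) :
    IsComplexSymmetric T :=
  isComplexSymmetric_of_commute_conjugation lp.isConjugation_star hS.star_apply
    fun x => ofLp_injective 2 (Prod.ext (hT x).1 (hT x).2)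

end
end

section
/- Let S denote the unilateral shift on ℓ²(ℕ), and for each n ≥ 1 let T_n be the operator on the Hilbert space H = ℓ²(ℕ) ⊕ (⊕_{j=1}^∞ ℓ²(ℕ)) ⊕ (⊕_{j=1}^∞ ℓ²(ℕ)) given by T_n = (n/(n+1)) S ⊕ (⊕_{j=1, j≠n}^∞ (j/(j+1)) S) ⊕ (⊕_{j=1}^∞ (j/(j+1)) S*). Then T_n is unitarily equivalent to ⊕_{j=1}^∞ (j/(j+1))(S ⊕ S*), and hence T_n is complex symmetric. -/
open Filter ContinuousLinearMap

noncomputable section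

/-- The coefficient `j/(j+1)`. -/
def coeff (j : ℕ+) : ℝ := (j : ℝ) / ((j : ℝ) + 1)

/-!
`T_n` differs from `⊕_j (j/(j+1)) (S ⊕ S*)` only in bookkeeping: the summand `(n/(n+1)) S` is
the missing `n`-th entry of `⊕_{j ≠ n} (j/(j+1)) S`, so splitting `ℓ²` off at the index `n` and
pairing the two remaining families coordinatewise is a unitary intertwining the two operators.
Complex symmetry is invariant under unitary equivalence, and `⊕_j c_j (S ⊕ S*)` is complex
symmetric for the conjugation `(u, v) ↦ (v̄, ū)` in every coordinate: since `S` commutes with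
entrywise conjugation, `⟪C x, T y⟫` is a symmetric bilinear form, which is equivalent to
`T = C T* C`.
-/

open scoped InnerProductSpace ENNReal lp

section Conjugation

variable {H K : Type*} [NormedAddCommGroup H] [InnerProductSpace ℂ H]
  [NormedAddCommGroup K] [InnerProductSpace ℂ K]

/-- Additivity and conjugate-linearity are checked by pairing with the vectors `C z`, which
exhaust `H`. -/
theorem isConjugation_of_inner_map_map {C : H → H} (hC : Function.Involutive C)
    (hCinner : ∀ x y, ⟪C x, C y⟫_ℂ = ⟪y, x⟫_ℂ) : IsConjugation C := by
  have ext_C {u v : H} (h : ∀ z, ⟪C z, u⟫_ℂ = ⟪C z, v⟫_ℂ) : u = v :=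
    ext_inner_left ℂ fun w => by rw [← hC w, h]
  refine ⟨fun x y => ext_C fun z => ?_, fun a x => ext_C fun z => ?_, fun x => ?_, hC⟩
  · rw [inner_add_right, hCinner, hCinner, hCinner, inner_add_left]
  · rw [inner_smul_right, hCinner, hCinner, inner_smul_left]
  · rw [@norm_eq_sqrt_re_inner ℂ, @norm_eq_sqrt_re_inner ℂ, hCinner]

theorem isComplexSymmetric_of_inner_symm [CompleteSpace H] {T : H →L[ℂ] H} {C : H → H}
    (hC : Function.Involutive C) (hCinner : ∀ x y, ⟪C x, C y⟫_ℂ = ⟪y, x⟫_ℂ)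
    (hT : ∀ x y, ⟪C x, T y⟫_ℂ = ⟪C y, T x⟫_ℂ) : IsComplexSymmetric T := by
  refine ⟨C, isConjugation_of_inner_map_map hC hCinner, fun x => ?_⟩
  have hadj : adjoint T (C x) = C (T x) := ext_inner_right ℂ fun v => by
    rw [adjoint_inner_left, hT, ← hCinner (T x) (C v), hC v]
  rw [hadj, hC]

theorem IsConjugation.conj_linearIsometryEquiv {C : K → K} (hC : IsConjugation C) (U : H ≃ₗᵢ[ℂ] K) :
    IsConjugation (U.symm ∘ C ∘ U) := by
  obtain ⟨hadd, hsmul, hnorm, hinv⟩ := hC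
  refine ⟨fun x y => ?_, fun a x => ?_, fun x => ?_, fun x => ?_⟩
  · simp only [Function.comp_apply, map_add, hadd]
  · simp only [Function.comp_apply, map_smul, hsmul]
  · simp only [Function.comp_apply, LinearIsometryEquiv.norm_map, hnorm]
  · simp only [Function.comp_apply, LinearIsometryEquiv.apply_symm_apply, hinv,
      LinearIsometryEquiv.symm_apply_apply]

theorem IsComplexSymmetric.of_intertwine [CompleteSpace H] [CompleteSpace K]
    {T : H →L[ℂ] H} {T' : K →L[ℂ] K} (h : IsComplexSymmetric T') (U : H ≃ₗᵢ[ℂ] K)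
    (hU : ∀ x, U (T x) = T' (U x)) : IsComplexSymmetric T := by
  obtain ⟨C, hC, hT'⟩ := h
  have hT : T = (U.symm : K →L[ℂ] H) ∘L T' ∘L (U : H →L[ℂ] K) := by
    ext x; simp [← hU]
  have hadj : ∀ y, adjoint T y = U.symm (adjoint T' (U y)) := fun y => by
    rw [hT, adjoint_comp, adjoint_comp, LinearIsometryEquiv.adjoint_eq_symm,
      LinearIsometryEquiv.adjoint_eq_symm]
    rfl
  refine ⟨U.symm ∘ C ∘ U, hC.conj_linearIsometryEquiv U, fun x => ?_⟩
  simp only [Function.comp_apply, hadj, LinearIsometryEquiv.apply_symm_apply, ← hT', ← hU,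
    LinearIsometryEquiv.symm_apply_apply]

end Conjugation

section LpSpace

variable {𝕜 ι : Type*} [RCLike 𝕜]

theorem memℓp_two_iff {E : ι → Type*} [∀ i, NormedAddCommGroup (E i)] {f : ∀ i, E i} :
    Memℓp f 2 ↔ Summable fun i => ‖f i‖ ^ 2 := by
  rw [memℓp_gen_iff (by norm_num)]
  norm_num

theorem Summable.of_subtype_ne {α : Type*} [AddCommGroup α] [TopologicalSpace α]
    [IsTopologicalAddGroup α] {f : ι → α} (i : ι) (hf : Summable fun j : {j // j ≠ i} => f j) :
    Summable f :=
  (Set.finite_singleton i).summable_compl_iff.1 hf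

theorem Summable.tsum_eq_add_tsum_subtype_ne {α : Type*} [UniformSpace α] [AddCommGroup α]
    [IsUniformAddGroup α] [CompleteSpace α] [T2Space α] {f : ι → α} (hf : Summable f) (i : ι) :
    ∑' j, f j = f i + ∑' j : {j // j ≠ i}, f j := by
  rw [← hf.tsum_subtype_add_tsum_subtype_compl {i}, tsum_singleton]
  rfl

namespace lp

def mapOfNormLE {E F : Type*} [NormedAddCommGroup E] [NormedAddCommGroup F] {p : ℝ≥0∞}
    (f : E → F) (hf : ∀ x, ‖f x‖ ≤ ‖x‖) (x : lp (fun _ : ι => E) p) : lp (fun _ : ι => F) p :=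
  ⟨fun i => f (x i), (lp.memℓp x).mono' fun i => hf (x i)⟩

section Prod

variable {E F : ι → Type*} [∀ i, NormedAddCommGroup (E i)] [∀ i, InnerProductSpace 𝕜 (E i)]
  [∀ i, NormedAddCommGroup (F i)] [∀ i, InnerProductSpace 𝕜 (F i)]

variable (𝕜 E F) in
def prodₗᵢ : WithLp 2 (lp E 2 × lp F 2) ≃ₗᵢ[𝕜] lp (fun i => WithLp 2 (E i × F i)) 2 :=
  LinearEquiv.isometryOfInner
    { toFun := fun x => ⟨fun i => WithLp.toLp 2 (x.ofLp.1 i, x.ofLp.2 i), memℓp_two_iff.2 <|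
        ((memℓp_two_iff.1 (lp.memℓp x.ofLp.1)).add (memℓp_two_iff.1 (lp.memℓp x.ofLp.2))).congr
          fun i => (WithLp.prod_norm_sq_eq_of_L2 (WithLp.toLp 2 (x.ofLp.1 i, x.ofLp.2 i))).symm⟩
      invFun := fun y => WithLp.toLp 2
        (⟨fun i => (y i).ofLp.1, (lp.memℓp y).mono' fun i => WithLp.norm_fst_le (x := y i)⟩,
          ⟨fun i => (y i).ofLp.2, (lp.memℓp y).mono' fun i => WithLp.norm_snd_le (x := y i)⟩)
      map_add' := fun _ _ => rfl
      map_smul' := fun _ _ => rfl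
      left_inv := fun _ => rfl
      right_inv := fun _ => rfl }
    fun x y => by
      rw [lp.inner_eq_tsum, WithLp.prod_inner_apply, lp.inner_eq_tsum, lp.inner_eq_tsum,
        ← (lp.summable_inner _ _).tsum_add (lp.summable_inner _ _)]
      exact tsum_congr fun i => WithLp.prod_inner_apply _ _

end Prod

section Split

variable {E : Type*} [NormedAddCommGroup E] [InnerProductSpace 𝕜 E]

theorem inner_eq_add_tsum_ne (y z : lp (fun _ : ι => E) 2) (i : ι) :
    ⟪y, z⟫_𝕜 = ⟪y i, z i⟫_𝕜 + ∑' j : {j // j ≠ i}, ⟪y j, z j⟫_𝕜 := by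
  rw [lp.inner_eq_tsum, (lp.summable_inner (𝕜 := 𝕜) y z).tsum_eq_add_tsum_subtype_ne i]

variable [DecidableEq ι]

variable (𝕜 E) in
def splitₗᵢ (i : ι) :
    lp (fun _ : ι => E) 2 ≃ₗᵢ[𝕜] WithLp 2 (E × lp (fun _ : {j // j ≠ i} => E) 2) :=
  LinearEquiv.isometryOfInner
    { toFun := fun y => WithLp.toLp 2 (y i, ⟨fun j => y j, memℓp_two_iff.2 <|
        (memℓp_two_iff.1 (lp.memℓp y)).comp_injective Subtype.val_injective⟩)
      invFun := fun x => ⟨fun j => if h : j = i then x.ofLp.1 else x.ofLp.2 ⟨j, h⟩,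
        memℓp_two_iff.2 <| .of_subtype_ne i <|
          (memℓp_two_iff.1 (lp.memℓp x.ofLp.2)).congr fun j => by rw [dif_neg j.2]⟩
      map_add' := fun _ _ => rfl
      map_smul' := fun _ _ => rfl
      left_inv := fun y => lp.ext <| funext fun j => by
        by_cases h : j = i
        · subst h; exact dif_pos rfl
        · exact dif_neg h
      right_inv := fun x => WithLp.ofLp_injective 2 <|
        Prod.ext (dif_pos rfl) (lp.ext <| funext fun j => dif_neg j.2) }
    fun y z => (WithLp.prod_inner_apply _ _).trans <|
      (congrArg _ (lp.inner_eq_tsum _ _)).trans (inner_eq_add_tsum_ne y z i).symm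

@[simp]
theorem splitₗᵢ_symm_apply_self (i : ι) (x : WithLp 2 (E × lp (fun _ : {j // j ≠ i} => E) 2)) :
    (splitₗᵢ 𝕜 E i).symm x i = x.ofLp.1 :=
  dif_pos rfl

theorem splitₗᵢ_symm_apply_of_ne {i : ι} (x : WithLp 2 (E × lp (fun _ : {j // j ≠ i} => E) 2))
    {j : ι} (h : j ≠ i) : (splitₗᵢ 𝕜 E i).symm x j = x.ofLp.2 ⟨j, h⟩ :=
  dif_neg h

end Split

section Regroup

variable {E F : Type*} [NormedAddCommGroup E] [InnerProductSpace 𝕜 E]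
  [NormedAddCommGroup F] [InnerProductSpace 𝕜 F] [DecidableEq ι]

variable (𝕜 E F) in
/-- The first summand `E` becomes the `i`-th coordinate of the first factor. -/
def regroupₗᵢ (i : ι) :
    WithLp 2 (E × WithLp 2 (lp (fun _ : {j // j ≠ i} => E) 2 × lp (fun _ : ι => F) 2)) ≃ₗᵢ[𝕜]
      lp (fun _ : ι => WithLp 2 (E × F)) 2 :=
  (LinearIsometryEquiv.withLpProdAssoc 2 𝕜 _ _ _).symm.trans <|
    (LinearIsometryEquiv.withLpProdCongr 2 (splitₗᵢ 𝕜 E i).symm (.refl 𝕜 _)).trans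
      (prodₗᵢ 𝕜 _ _)

variable {i : ι}
  (x : WithLp 2 (E × WithLp 2 (lp (fun _ : {j // j ≠ i} => E) 2 × lp (fun _ : ι => F) 2)))

theorem regroupₗᵢ_apply_self_fst : (regroupₗᵢ 𝕜 E F i x i).ofLp.1 = x.ofLp.1 :=
  splitₗᵢ_symm_apply_self (𝕜 := 𝕜) i _

theorem regroupₗᵢ_apply_fst_of_ne {j : ι} (h : j ≠ i) :
    (regroupₗᵢ 𝕜 E F i x j).ofLp.1 = x.ofLp.2.ofLp.1 ⟨j, h⟩ :=
  splitₗᵢ_symm_apply_of_ne (𝕜 := 𝕜) _ h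

theorem regroupₗᵢ_apply_snd (j : ι) : (regroupₗᵢ 𝕜 E F i x j).ofLp.2 = x.ofLp.2.ofLp.2 j :=
  rfl

theorem regroupₗᵢ_intertwine (c : ι → 𝕜) (A : E → E) (B : F → F)
    {T : WithLp 2 (E × WithLp 2 (lp (fun _ : {j // j ≠ i} => E) 2 × lp (fun _ : ι => F) 2)) →
      WithLp 2 (E × WithLp 2 (lp (fun _ : {j // j ≠ i} => E) 2 × lp (fun _ : ι => F) 2))}
    (hT : ∀ x, (T x).ofLp.1 = c i • A x.ofLp.1 ∧
      (∀ j : {j // j ≠ i}, (T x).ofLp.2.ofLp.1 j = c j • A (x.ofLp.2.ofLp.1 j)) ∧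
      (∀ j, (T x).ofLp.2.ofLp.2 j = c j • B (x.ofLp.2.ofLp.2 j)))
    {T' : lp (fun _ : ι => WithLp 2 (E × F)) 2 → lp (fun _ : ι => WithLp 2 (E × F)) 2}
    (hT' : ∀ y j, (T' y j).ofLp.1 = c j • A (y j).ofLp.1 ∧ (T' y j).ofLp.2 = c j • B (y j).ofLp.2) :
    regroupₗᵢ 𝕜 E F i (T x) = T' (regroupₗᵢ 𝕜 E F i x) := by
  refine lp.ext <| funext fun j => WithLp.ofLp_injective 2 <| Prod.ext ?_ ?_
  · rw [(hT' _ j).1]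
    by_cases h : j = i
    · subst h
      rw [regroupₗᵢ_apply_self_fst, regroupₗᵢ_apply_self_fst, (hT x).1]
    · rw [regroupₗᵢ_apply_fst_of_ne _ h, regroupₗᵢ_apply_fst_of_ne _ h, (hT x).2.1 ⟨j, h⟩]
  · rw [(hT' _ j).2, regroupₗᵢ_apply_snd, regroupₗᵢ_apply_snd, (hT x).2.2 j]

end Regroup

theorem inner_star_left_comm (u v : ℓ²(ι, 𝕜)) : ⟪star u, v⟫_𝕜 = ⟪star v, u⟫_𝕜 := by
  rw [lp.inner_eq_tsum, lp.inner_eq_tsum]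
  exact tsum_congr fun i => by simp [lp.star_apply, mul_comm]

theorem inner_star_star (u v : ℓ²(ι, 𝕜)) : ⟪star u, star v⟫_𝕜 = ⟪v, u⟫_𝕜 := by
  rw [inner_star_left_comm, star_star]

end lp

theorem inner_star_adjoint_eq_of_map_star {S : ℓ²(ι, 𝕜) →L[𝕜] ℓ²(ι, 𝕜)}
    (hS : ∀ a, S (star a) = star (S a)) (u v : ℓ²(ι, 𝕜)) :
    ⟪star u, adjoint S v⟫_𝕜 = ⟪star v, S u⟫_𝕜 := by
  rw [adjoint_inner_right, hS, lp.inner_star_left_comm]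

end LpSpace

theorem IsUnilateralShift.map_star {S : ellTwo →L[ℂ] ellTwo} (hS : IsUnilateralShift S)
    (a : ellTwo) : S (star a) = star (S a) := by
  ext k
  cases k with
  | zero => simp [lp.star_apply, (hS _).1]
  | succ m => simp [lp.star_apply, (hS _).2]

section SwapStar

variable {κ : Type*}

def swapStar (a : WithLp 2 (ℓ²(κ, ℂ) × ℓ²(κ, ℂ))) : WithLp 2 (ℓ²(κ, ℂ) × ℓ²(κ, ℂ)) :=
  WithLp.toLp 2 (star a.ofLp.2, star a.ofLp.1)

theorem swapStar_swapStar (a : WithLp 2 (ℓ²(κ, ℂ) × ℓ²(κ, ℂ))) : swapStar (swapStar a) = a := by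
  simp only [swapStar, star_star]

theorem inner_swapStar_swapStar (a b : WithLp 2 (ℓ²(κ, ℂ) × ℓ²(κ, ℂ))) :
    ⟪swapStar a, swapStar b⟫_ℂ = ⟪b, a⟫_ℂ := by
  rw [WithLp.prod_inner_apply, WithLp.prod_inner_apply]
  simp only [swapStar, lp.inner_star_star]
  exact add_comm _ _

theorem norm_swapStar (a : WithLp 2 (ℓ²(κ, ℂ) × ℓ²(κ, ℂ))) : ‖swapStar a‖ = ‖a‖ := by
  rw [@norm_eq_sqrt_re_inner ℂ, @norm_eq_sqrt_re_inner ℂ, inner_swapStar_swapStar]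

theorem isComplexSymmetric_directSum_of_map_star {ι : Type*} {S : ℓ²(κ, ℂ) →L[ℂ] ℓ²(κ, ℂ)}
    (hS : ∀ a, S (star a) = star (S a)) (c : ι → ℂ)
    {T : lp (fun _ : ι => WithLp 2 (ℓ²(κ, ℂ) × ℓ²(κ, ℂ))) 2 →L[ℂ]
      lp (fun _ : ι => WithLp 2 (ℓ²(κ, ℂ) × ℓ²(κ, ℂ))) 2}
    (hT : ∀ y j, (T y j).ofLp.1 = c j • S (y j).ofLp.1 ∧
      (T y j).ofLp.2 = c j • adjoint S (y j).ofLp.2) :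
    IsComplexSymmetric T := by
  refine isComplexSymmetric_of_inner_symm
    (C := lp.mapOfNormLE swapStar fun a => (norm_swapStar a).le)
    (fun y => lp.ext <| funext fun j => swapStar_swapStar (y j))
    (fun y z => ?_) (fun y z => ?_)
  · rw [lp.inner_eq_tsum, lp.inner_eq_tsum]
    exact tsum_congr fun j => inner_swapStar_swapStar (y j) (z j)
  · rw [lp.inner_eq_tsum, lp.inner_eq_tsum]
    refine tsum_congr fun j => ?_
    change ⟪swapStar (y j), T z j⟫_ℂ = ⟪swapStar (z j), T y j⟫_ℂ
    rw [WithLp.prod_inner_apply, WithLp.prod_inner_apply, (hT z j).1, (hT z j).2, (hT y j).1,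
      (hT y j).2]
    simp only [swapStar, inner_smul_right, inner_star_adjoint_eq_of_map_star hS]
    ring

end SwapStar

/-- For `n ≥ 1`, the operator
`T_n = (n/(n+1)) S ⊕ (⊕_{j≥1, j≠n} (j/(j+1)) S) ⊕ (⊕_{j≥1} (j/(j+1)) S*)`
on `ℓ²(ℕ) ⊕ (⊕_{j≠n} ℓ²(ℕ)) ⊕ (⊕_{j≥1} ℓ²(ℕ))` is unitarily equivalent to
`⊕_{j≥1} (j/(j+1)) (S ⊕ S*)`, and hence `T_n` is complex symmetric. -/
theorem tn_unitarilyEquiv_and_complexSymmetric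
    (S : ellTwo →L[ℂ] ellTwo) (hS : IsUnilateralShift S) (n : ℕ+)
    -- the Hilbert space ℓ² ⊕ (⊕_{j≥1, j≠n} ℓ²) ⊕ (⊕_{j≥1} ℓ²) on which T_n acts:
    (Tn : WithLp 2 (ellTwo ×
            WithLp 2 ((lp (fun _ : {j : ℕ+ // j ≠ n} => ellTwo) 2) ×
                      (lp (fun _ : ℕ+ => ellTwo) 2))) →L[ℂ]
          WithLp 2 (ellTwo ×
            WithLp 2 ((lp (fun _ : {j : ℕ+ // j ≠ n} => ellTwo) 2) ×
                      (lp (fun _ : ℕ+ => ellTwo) 2))))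
    (hTn : ∀ x,
      (Tn x).ofLp.1 = (coeff n : ℂ) • S x.ofLp.1 ∧
      (∀ j : {j : ℕ+ // j ≠ n}, (Tn x).ofLp.2.ofLp.1 j = (coeff j : ℂ) • S (x.ofLp.2.ofLp.1 j)) ∧
      (∀ j : ℕ+, (Tn x).ofLp.2.ofLp.2 j = (coeff j : ℂ) • ContinuousLinearMap.adjoint S (x.ofLp.2.ofLp.2 j)))
    -- the operator ⊕_{j≥1} (j/(j+1)) (S ⊕ S*) on ⊕_{j≥1} (ℓ² ⊕ ℓ²):
    (T' : lp (fun _ : ℕ+ => WithLp 2 (ellTwo × ellTwo)) 2 →L[ℂ]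
          lp (fun _ : ℕ+ => WithLp 2 (ellTwo × ellTwo)) 2)
    (hT' : ∀ y (j : ℕ+),
      (T' y j).ofLp.1 = (coeff j : ℂ) • S ((y j).ofLp.1) ∧
      (T' y j).ofLp.2 = (coeff j : ℂ) • ContinuousLinearMap.adjoint S ((y j).ofLp.2)) :
    (∃ U : (WithLp 2 (ellTwo ×
            WithLp 2 ((lp (fun _ : {j : ℕ+ // j ≠ n} => ellTwo) 2) ×
                      (lp (fun _ : ℕ+ => ellTwo) 2)))) ≃ₗᵢ[ℂ]
           (lp (fun _ : ℕ+ => WithLp 2 (ellTwo × ellTwo)) 2),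
        ∀ x, U (Tn x) = T' (U x)) ∧
    IsComplexSymmetric Tn := by
  let U := lp.regroupₗᵢ ℂ ellTwo ellTwo n
  have hU : ∀ x, U (Tn x) = T' (U x) := fun x =>
    lp.regroupₗᵢ_intertwine x (fun j => (coeff j : ℂ)) S (adjoint S) hTn hT'
  exact ⟨⟨U, hU⟩, (isComplexSymmetric_directSum_of_map_star hS.map_star _ hT').of_intertwine U hU⟩
end
end

section
/- Let S denote the unilateral shift on ℓ²(ℕ). On the Hilbert space H = ℓ²(ℕ) ⊕ (⊕_{j=1}^∞ ℓ²(ℕ)) ⊕ (⊕_{j=1}^∞ ℓ²(ℕ)), let T = S ⊕ (⊕_{j=1}^∞ (j/(j+1)) S) ⊕ (⊕_{j=1}^∞ (j/(j+1)) S*). Then for every y ∈ H, ‖(T*)^k y‖ → 0 as k → ∞; in particular, there is no unit vector y ∈ H with ‖(T*)^k y‖ = 1 for all k ≥ 0. -/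
/-!
Testing `T*` against the coordinate subspaces, on which `T` acts as `S`, `cⱼ S` and `cⱼ S*`
(`cⱼ = j/(j+1)`), shows that `T*` acts coordinatewise as `S* ⊕ ⨁ cⱼ S* ⊕ ⨁ cⱼ S`. On the first
summand `(S*)ᵏ y` is `y` shifted by `k` places, so its squared norm is the tail of a convergent
series. On the other summands the `j`-th coordinate has norm at most `cⱼᵏ ‖yⱼ‖`; since
`sup cⱼ = 1` there is no uniform decay, but each coordinate tends to `0` while staying dominated
by `‖yⱼ‖`, so dominated convergence for `ℓ²` sums finishes the argument.
-/

open Filter ContinuousLinearMap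

noncomputable section

/-- `⊕_{j=1}^∞ ℓ²(ℕ)`. -/
abbrev Bspace : Type := lp (fun _ : ℕ+ => ellTwo) 2

/-- The Hilbert space `H = ℓ²(ℕ) ⊕ (⊕_{j=1}^∞ ℓ²(ℕ)) ⊕ (⊕_{j=1}^∞ ℓ²(ℕ))`. -/
abbrev Hspace : Type := WithLp 2 (ellTwo × WithLp 2 (Bspace × Bspace))

/-- The operator `T = S ⊕ (⊕_{j=1}^∞ (j/(j+1)) S) ⊕ (⊕_{j=1}^∞ (j/(j+1)) S*)` on `H`,
acting coordinatewise. -/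
def IsTheOperatorT (S : ellTwo →L[ℂ] ellTwo) (T : Hspace →L[ℂ] Hspace) : Prop :=
  ∀ x : Hspace,
    (T x).ofLp.1 = S x.ofLp.1 ∧
    (∀ j : ℕ+, (T x).ofLp.2.ofLp.1 j = (coeff j : ℂ) • S (x.ofLp.2.ofLp.1 j)) ∧
    (∀ j : ℕ+, (T x).ofLp.2.ofLp.2 j = (coeff j : ℂ) • ContinuousLinearMap.adjoint S (x.ofLp.2.ofLp.2 j))


open Topology
open scoped InnerProductSpace ENNReal

namespace lp

variable {α ι : Type*} {l : Filter α} {p : ℝ≥0∞} {E : ι → Type*} [∀ i, NormedAddCommGroup (E i)]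

lemma tendsto_norm_zero_of_tendsto_tsum (hp : 0 < p.toReal) {f : α → lp E p}
    (h : Tendsto (fun k => ∑' i, ‖f k i‖ ^ p.toReal) l (𝓝 0)) :
    Tendsto (fun k => ‖f k‖) l (𝓝 0) := by
  have := h.rpow_const (p := 1 / p.toReal) (Or.inr (by positivity))
  rw [Real.zero_rpow (by positivity)] at this
  simpa only [← norm_eq_tsum_rpow hp] using this

lemma tendsto_norm_zero_of_dominated (hp : 0 < p.toReal) {f : α → lp E p} (g : lp E p)
    (hle : ∀ k i, ‖f k i‖ ≤ ‖g i‖)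
    (hlim : ∀ i, Tendsto (fun k => ‖f k i‖) l (𝓝 0)) :
    Tendsto (fun k => ‖f k‖) l (𝓝 0) := by
  refine tendsto_norm_zero_of_tendsto_tsum hp ?_
  have := tendsto_tsum_of_dominated_convergence (𝓕 := l)
    (f := fun k i => ‖f k i‖ ^ p.toReal) (g := fun _ => (0 : ℝ))
    ((lp.memℓp g).summable hp) (fun i => ?_) (Eventually.of_forall fun k i => ?_)
  · simpa using this
  · simpa [Real.zero_rpow hp.ne'] using (hlim i).rpow_const (p := p.toReal) (Or.inr hp.le)
  · rw [Real.norm_of_nonneg (by positivity)]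
    gcongr
    exact hle k i

lemma tendsto_norm_zero_of_norm_apply_le_pow_mul (hp : 0 < p.toReal) {f : ℕ → lp E p}
    (g : lp E p) {c : ι → ℝ} (hc₀ : ∀ i, 0 ≤ c i) (hc₁ : ∀ i, c i < 1)
    (hf : ∀ k i, ‖f k i‖ ≤ c i ^ k * ‖g i‖) :
    Tendsto (fun k => ‖f k‖) atTop (𝓝 0) :=
  tendsto_norm_zero_of_dominated hp g
    (fun k i => (hf k i).trans <|
      mul_le_of_le_one_left (norm_nonneg _) (pow_le_one₀ (hc₀ i) (hc₁ i).le))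
    fun i => squeeze_zero (fun _ => norm_nonneg _) (fun k => hf k i) <| by
      simpa using (tendsto_pow_atTop_nhds_zero_of_lt_one (hc₀ i) (hc₁ i)).mul_const ‖g i‖

lemma tendsto_norm_zero_of_apply_eq_add {F : Type*} [NormedAddCommGroup F]
    (hp : 0 < p.toReal) (b : lp (fun _ : ℕ => F) p) {f : ℕ → lp (fun _ : ℕ => F) p}
    (hf : ∀ k n, f k n = b (n + k)) :
    Tendsto (fun k => ‖f k‖) atTop (𝓝 0) :=
  tendsto_norm_zero_of_tendsto_tsum hp <| by
    simpa only [hf] using tendsto_sum_nat_add fun n => ‖b n‖ ^ p.toReal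

end lp

lemma WithLp.tendsto_norm_zero_of_fst_snd {α E F : Type*} {l : Filter α} {p : ℝ≥0∞}
    [Fact (1 ≤ p)] [SeminormedAddCommGroup E] [SeminormedAddCommGroup F]
    {f : α → WithLp p (E × F)} (h₁ : Tendsto (fun k => ‖(f k).ofLp.1‖) l (𝓝 0))
    (h₂ : Tendsto (fun k => ‖(f k).ofLp.2‖) l (𝓝 0)) :
    Tendsto (fun k => ‖f k‖) l (𝓝 0) := by
  have h := (tendsto_zero_iff_norm_tendsto_zero.2 h₁).prodMk_nhds
    (tendsto_zero_iff_norm_tendsto_zero.2 h₂)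
  have := ((WithLp.prod_continuous_toLp p E F).tendsto _).comp h
  exact tendsto_zero_iff_norm_tendsto_zero.1 this

namespace ContinuousLinearMap

lemma norm_pow_apply_le_of_norm_le {𝕜 E : Type*} [NontriviallyNormedField 𝕜]
    [SeminormedAddCommGroup E] [NormedSpace 𝕜 E] {A : E →L[𝕜] E} {c : ℝ} (hA : ‖A‖ ≤ c)
    (k : ℕ) (x : E) : ‖(A ^ k) x‖ ≤ c ^ k * ‖x‖ := by
  induction k with
  | zero => simp
  | succ k ih =>
    calc ‖(A ^ (k + 1)) x‖ = ‖A ((A ^ k) x)‖ := by rw [pow_succ', mul_apply_eq_comp]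
      _ ≤ c * (c ^ k * ‖x‖) :=
        (A.le_of_opNorm_le hA _).trans (by gcongr; exact (norm_nonneg A).trans hA)
      _ = c ^ (k + 1) * ‖x‖ := by ring

variable {𝕜 E F : Type*} [RCLike 𝕜] [NormedAddCommGroup E] [InnerProductSpace 𝕜 E] [CompleteSpace E]
  [NormedAddCommGroup F] [InnerProductSpace 𝕜 F] [CompleteSpace F]

lemma adjoint_pow_apply_of_semiconj {T : F →L[𝕜] F} {A : E →L[𝕜] E} {J : E → F} {P : F → E}
    (hJP : ∀ v y, ⟪J v, y⟫_𝕜 = ⟪v, P y⟫_𝕜) (hTJ : Function.Semiconj J A T) (k : ℕ) (y : F) :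
    P ((adjoint T ^ k) y) = (adjoint A ^ k) (P y) := by
  have hk : Function.Semiconj J ⇑(A ^ k) ⇑(T ^ k) := by
    simpa only [FunLike.coe_pow_eq_iterate] using hTJ.iterate_right k
  simp only [← star_eq_adjoint, ← star_pow]
  refine ext_inner_left 𝕜 fun v => ?_
  rw [← hJP, star_eq_adjoint, adjoint_inner_right, ← hk, hJP, star_eq_adjoint,
    adjoint_inner_right]

end ContinuousLinearMap

lemma coeff_nonneg (j : ℕ+) : 0 ≤ coeff j := by
  unfold coeff
  positivity

lemma coeff_lt_one (j : ℕ+) : coeff j < 1 := by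
  rw [coeff, div_lt_one (by positivity)]
  linarith

lemma norm_coeff_smul_le {E : Type*} [SeminormedAddCommGroup E] [NormedSpace ℂ E]
    {A : E →L[ℂ] E} (hA : ‖A‖ ≤ 1) (j : ℕ+) : ‖(coeff j : ℂ) • A‖ ≤ coeff j := by
  rw [norm_smul, Complex.norm_real, Real.norm_of_nonneg (coeff_nonneg j)]
  exact mul_le_of_le_one_right (coeff_nonneg j) hA

namespace IsUnilateralShift

variable {S : ellTwo →L[ℂ] ellTwo} (hS : IsUnilateralShift S)
include hS

lemma apply_single (n : ℕ) : S (lp.single 2 n 1) = lp.single 2 (n + 1) 1 := by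
  ext m
  cases m with
  | zero => simp [(hS _).1]
  | succ m => simp [(hS _).2, lp.single_apply, Pi.single_apply]

lemma adjoint_apply (b : ellTwo) (n : ℕ) : adjoint S b n = b (n + 1) := by
  have key (c : ellTwo) (m : ℕ) : ⟪lp.single 2 m (1 : ℂ), c⟫_ℂ = c m := by
    simp [lp.inner_single_left]
  rw [← key, adjoint_inner_right, hS.apply_single, key]

lemma adjoint_pow_apply (k : ℕ) (b : ellTwo) (n : ℕ) : ((adjoint S ^ k) b) n = b (n + k) := by
  induction k generalizing n with
  | zero => simp
  | succ k ih =>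
    rw [pow_succ', mul_apply_eq_comp, hS.adjoint_apply, ih, add_right_comm, add_assoc]

lemma adjoint_comp_self : adjoint S ∘L S = 1 := by
  ext b n
  simp [hS.adjoint_apply, (hS b).2]

lemma norm_le_one : ‖S‖ ≤ 1 :=
  S.opNorm_le_bound zero_le_one fun a => by
    rw [S.norm_map_iff_adjoint_comp_self.2 hS.adjoint_comp_self, one_mul]

lemma tendsto_norm_adjoint_pow_apply (b : ellTwo) :
    Tendsto (fun k => ‖(adjoint S ^ k) b‖) atTop (𝓝 0) :=
  lp.tendsto_norm_zero_of_apply_eq_add (by norm_num) b (hS.adjoint_pow_apply · b)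

end IsUnilateralShift

lemma Hspace.ext {x y : Hspace} (h₁ : x.ofLp.1 = y.ofLp.1)
    (h₂ : ∀ j, x.ofLp.2.ofLp.1 j = y.ofLp.2.ofLp.1 j)
    (h₃ : ∀ j, x.ofLp.2.ofLp.2 j = y.ofLp.2.ofLp.2 j) : x = y :=
  WithLp.ofLp_injective _ <| Prod.ext h₁ <| WithLp.ofLp_injective _ <|
    Prod.ext (lp.ext (funext h₂)) (lp.ext (funext h₃))

namespace IsTheOperatorT

variable {S : ellTwo →L[ℂ] ellTwo} {T : Hspace →L[ℂ] Hspace} (hT : IsTheOperatorT S T)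
include hT

lemma semiconj_inl : Function.Semiconj (fun v : ellTwo => (WithLp.toLp 2 (v, 0) : Hspace)) S T :=
  fun v => (Hspace.ext (hT _).1 (fun j => by rw [(hT _).2.1]; simp)
    (fun j => by rw [(hT _).2.2]; simp)).symm

lemma semiconj_single_fst (j : ℕ+) :
    Function.Semiconj
      (fun v : ellTwo => (WithLp.toLp 2 (0, WithLp.toLp 2 (lp.single 2 j v, 0)) : Hspace))
      ⇑((coeff j : ℂ) • S) T :=
  fun v => (Hspace.ext (by rw [(hT _).1]; simp)
    (fun i => by
      rw [(hT _).2.1]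
      rcases eq_or_ne i j with rfl | h <;> simp [*, -Complex.coe_smul])
    (fun i => by rw [(hT _).2.2]; simp)).symm

lemma semiconj_single_snd (j : ℕ+) :
    Function.Semiconj
      (fun v : ellTwo => (WithLp.toLp 2 (0, WithLp.toLp 2 (0, lp.single 2 j v)) : Hspace))
      ⇑((coeff j : ℂ) • adjoint S) T :=
  fun v => (Hspace.ext (by rw [(hT _).1]; simp)
    (fun i => by rw [(hT _).2.1]; simp)
    (fun i => by
      rw [(hT _).2.2]
      rcases eq_or_ne i j with rfl | h <;> simp [*, -Complex.coe_smul])).symm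

lemma adjoint_pow_apply_fst (k : ℕ) (y : Hspace) :
    ((adjoint T ^ k) y).ofLp.1 = (adjoint S ^ k) y.ofLp.1 :=
  adjoint_pow_apply_of_semiconj (P := fun y : Hspace => y.ofLp.1)
    (fun v y => by simp [WithLp.prod_inner_apply]) hT.semiconj_inl k y

lemma norm_adjoint_pow_apply_snd_fst_le (hS : IsUnilateralShift S) (k : ℕ) (y : Hspace)
    (j : ℕ+) :
    ‖((adjoint T ^ k) y).ofLp.2.ofLp.1 j‖ ≤ coeff j ^ k * ‖y.ofLp.2.ofLp.1 j‖ := by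
  rw [adjoint_pow_apply_of_semiconj (P := fun y : Hspace => y.ofLp.2.ofLp.1 j)
    (fun v y => by simp [WithLp.prod_inner_apply, lp.inner_single_left])
    (hT.semiconj_single_fst j)]
  refine norm_pow_apply_le_of_norm_le ?_ k _
  rw [adjoint.norm_map]
  exact norm_coeff_smul_le hS.norm_le_one j

lemma norm_adjoint_pow_apply_snd_snd_le (hS : IsUnilateralShift S) (k : ℕ) (y : Hspace)
    (j : ℕ+) :
    ‖((adjoint T ^ k) y).ofLp.2.ofLp.2 j‖ ≤ coeff j ^ k * ‖y.ofLp.2.ofLp.2 j‖ := by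
  rw [adjoint_pow_apply_of_semiconj (P := fun y : Hspace => y.ofLp.2.ofLp.2 j)
    (fun v y => by simp [WithLp.prod_inner_apply, lp.inner_single_left])
    (hT.semiconj_single_snd j)]
  refine norm_pow_apply_le_of_norm_le ?_ k _
  rw [adjoint.norm_map]
  exact norm_coeff_smul_le (by rw [adjoint.norm_map]; exact hS.norm_le_one) j

end IsTheOperatorT

/-- For `T = S ⊕ (⊕_j (j/(j+1)) S) ⊕ (⊕_j (j/(j+1)) S*)` on
`H = ℓ²(ℕ) ⊕ (⊕_{j=1}^∞ ℓ²(ℕ)) ⊕ (⊕_{j=1}^∞ ℓ²(ℕ))`, the powers of `T*` tend strongly to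
zero; in particular there is no unit vector `y` with `‖(T*)^k y‖ = 1` for all `k ≥ 0`. -/
theorem adjoint_pow_tendsto_zero_T
    (S : ellTwo →L[ℂ] ellTwo) (hS : IsUnilateralShift S)
    (T : Hspace →L[ℂ] Hspace) (hT : IsTheOperatorT S T) :
    (∀ y : Hspace,
      Tendsto (fun k : ℕ => ‖((ContinuousLinearMap.adjoint T) ^ k) y‖) atTop (nhds 0)) ∧
    ¬ ∃ y : Hspace, ‖y‖ = 1 ∧
        ∀ k : ℕ, ‖((ContinuousLinearMap.adjoint T) ^ k) y‖ = 1 := by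
  have htendsto (y : Hspace) : Tendsto (fun k => ‖(adjoint T ^ k) y‖) atTop (𝓝 0) :=
    WithLp.tendsto_norm_zero_of_fst_snd
      (by simpa only [hT.adjoint_pow_apply_fst] using hS.tendsto_norm_adjoint_pow_apply y.ofLp.1)
      (WithLp.tendsto_norm_zero_of_fst_snd
        (lp.tendsto_norm_zero_of_norm_apply_le_pow_mul (by norm_num) y.ofLp.2.ofLp.1
          coeff_nonneg coeff_lt_one fun k j => hT.norm_adjoint_pow_apply_snd_fst_le hS k y j)
        (lp.tendsto_norm_zero_of_norm_apply_le_pow_mul (by norm_num) y.ofLp.2.ofLp.2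
          coeff_nonneg coeff_lt_one fun k j => hT.norm_adjoint_pow_apply_snd_snd_le hS k y j))
  refine ⟨htendsto, fun ⟨y, _, hy⟩ => ?_⟩
  exact one_ne_zero (tendsto_nhds_unique tendsto_const_nhds ((htendsto y).congr hy))
end
end
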